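/- The four-valued truth tables for BDi3+AxG are sound and complete with respect to the class of linear two-element BDi3-Kripke models: Γ ⊨_{i3g3} A iff Γ ⊨₄ A, where ⊨₄ preserves the value 1 under all four-valued assignments. -/
import Mathlib


inductive Fm : Type where
  | atom : Nat → Fm
  | bot : Fm
  | snot : Fm → Fm
  | and : Fm → Fm → Fm
  | or : Fm → Fm → Fm
  | imp : Fm → Fm → Fm
deriving DecidableEq

/-- Intuitionistic/Boolean negation `¬A := A → ⊥`. -/
def negFm (A : Fm) : Fm := Fm.imp A Fm.bot

/-- Biconditional `A ↔ B := (A→B) ∧ (B→A)`. -/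
def iffFm (A B : Fm) : Fm := Fm.and (Fm.imp A B) (Fm.imp B A)

structure KModel where
  W : Type
  le : W → W → Prop
  refl : ∀ w, le w w
  trans : ∀ {u v w}, le u v → le v w → le u w
  antisymm : ∀ {u v}, le u v → le v u → u = v
  Vp : W → Nat → Prop
  Vm : W → Nat → Prop
  monoP : ∀ {w x n}, le w x → Vp w n → Vp x n
  monoM : ∀ {w x n}, le w x → Vm w n → Vm x n

/-- BDi3 forcing: `(force M A w).1` is "1 ∈ I(w,A)", `(force M A w).2` is "0 ∈ I(w,A)". -/
def force (M : KModel) : Fm → M.W → Prop × Prop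
  | .atom n, w => (M.Vp w n, M.Vm w n)
  | .bot, _ => (False, True)
  | .snot A, w => ((force M A w).2, (force M A w).1)
  | .and A B, w => ((force M A w).1 ∧ (force M B w).1, (force M A w).2 ∨ (force M B w).2)
  | .or A B, w => ((force M A w).1 ∨ (force M B w).1, (force M A w).2 ∧ (force M B w).2)
  | .imp A B, w =>
      ((∀ x, M.le w x → (force M A x).1 → (force M B x).1),
       (∀ x, M.le w x → ¬ (force M A x).2) ∧ (force M B w).2)

structure BDi3Model extends KModel where
  disjoint : ∀ w n, ¬ (Vp w n ∧ Vm w n)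
  maxsucc : ∀ w, ∃ x, le w x ∧ ∀ y, le x y → y = x
  po : ∀ w x n, le w x → ∃ y, le x y ∧ (Vp y n ∨ Vm y n)

inductive FourVal : Type where
  | one : FourVal
  | i : FourVal
  | j : FourVal
  | zero : FourVal
deriving DecidableEq

def FourVal.rank : FourVal → Nat
  | .one => 3
  | .i => 2
  | .j => 1
  | .zero => 0

/-- Meet for the linear order 0 < j < i < 1. -/
def and4 (a b : FourVal) : FourVal := if a.rank ≤ b.rank then a else b
/-- Join for the linear order 0 < j < i < 1. -/
def or4 (a b : FourVal) : FourVal := if a.rank ≤ b.rank then b else a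

def imp4 : FourVal → FourVal → FourVal
  | .one, b => b
  | .i, .one => .one
  | .i, .i => .one
  | .i, .j => .j
  | .i, .zero => .zero
  | .j, _ => .one
  | .zero, _ => .one

def snot4 : FourVal → FourVal
  | .one => .zero
  | .i => .j
  | .j => .i
  | .zero => .one

/-- Four-valued interpretation extending an assignment. -/
def I4 (v : Nat → FourVal) : Fm → FourVal
  | .atom n => v n
  | .bot => .zero
  | .snot A => snot4 (I4 v A)
  | .and A B => and4 (I4 v A) (I4 v B)
  | .or A B => or4 (I4 v A) (I4 v B)
  | .imp A B => imp4 (I4 v A) (I4 v B)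

def linearM (M : BDi3Model) : Prop := ∀ u v : M.W, M.le u v ∨ M.le v u

def atMostTwo (M : BDi3Model) : Prop := ∀ u v w : M.W, u = v ∨ u = w ∨ v = w

/-- Consequence over the class of linear BDi3-Kripke models with at most two
elements. -/
def consI3G3 (Γ : Set Fm) (A : Fm) : Prop :=
  ∀ M : BDi3Model, linearM M → atMostTwo M → ∀ w : M.W,
    (∀ B ∈ Γ, (force M.toKModel B w).1) → (force M.toKModel A w).1

/-- Four-valued consequence: preservation of the value 1. -/
def cons4 (Γ : Set Fm) (A : Fm) : Prop :=
  ∀ v : Nat → FourVal, (∀ B ∈ Γ, I4 v B = FourVal.one) → I4 v A = FourVal.one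

instance : Fintype FourVal :=
  ⟨{FourVal.one, FourVal.i, FourVal.j, FourVal.zero}, by intro x; cases x <;> decide⟩

lemma forall_above {M : KModel} {x y : M.W} (hxy : M.le x y)
    (habove : ∀ u, M.le x u → u = x ∨ u = y) (P : M.W → Prop) :
    (∀ u, M.le x u → P u) ↔ (P x ∧ P y) :=
  ⟨fun h => ⟨h x (M.refl x), h y hxy⟩,
   fun h u hu => by rcases habove u hu with rfl | rfl; exacts [h.1, h.2]⟩

lemma forall_top {M : KModel} {y : M.W} (hmax : ∀ u, M.le y u → u = y) (P : M.W → Prop) :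
    (∀ u, M.le y u → P u) ↔ P y :=
  ⟨fun h => h y (M.refl y), fun hy u hu => by rcases hmax u hu with rfl; exact hy⟩

lemma key (M : KModel) (x y : M.W) (hxy : M.le x y)
    (habove : ∀ u, M.le x u → u = x ∨ u = y) (hmax : ∀ u, M.le y u → u = y)
    (v : Nat → FourVal)
    (h1 : ∀ n, M.Vp x n ↔ v n = .one)
    (h2 : ∀ n, M.Vp y n ↔ (v n = .one ∨ v n = .i))
    (h3 : ∀ n, M.Vm x n ↔ v n = .zero)
    (h4 : ∀ n, M.Vm y n ↔ (v n = .zero ∨ v n = .j)) :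
    ∀ A : Fm,
      ((force M A x).1 ↔ I4 v A = .one) ∧
      ((force M A y).1 ↔ (I4 v A = .one ∨ I4 v A = .i)) ∧
      ((force M A x).2 ↔ I4 v A = .zero) ∧
      ((force M A y).2 ↔ (I4 v A = .zero ∨ I4 v A = .j)) := by
  intro A
  induction A with
  | atom n => exact ⟨h1 n, h2 n, h3 n, h4 n⟩
  | bot => simp [force, I4]
  | snot A ih =>
      obtain ⟨i1, i2, i3, i4⟩ := ih
      refine ⟨?_, ?_, ?_, ?_⟩ <;> simp only [force, I4]
      · rw [i3]
        exact (by decide : ∀ a : FourVal, (a = .zero ↔ snot4 a = .one)) _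
      · rw [i4]
        exact (by decide : ∀ a : FourVal,
          ((a = .zero ∨ a = .j) ↔ (snot4 a = .one ∨ snot4 a = .i))) _
      · rw [i1]
        exact (by decide : ∀ a : FourVal, (a = .one ↔ snot4 a = .zero)) _
      · rw [i2]
        exact (by decide : ∀ a : FourVal,
          ((a = .one ∨ a = .i) ↔ (snot4 a = .zero ∨ snot4 a = .j))) _
  | and A B ihA ihB =>
      obtain ⟨a1, a2, a3, a4⟩ := ihA
      obtain ⟨b1, b2, b3, b4⟩ := ihB
      refine ⟨?_, ?_, ?_, ?_⟩ <;> simp only [force, I4]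
      · rw [a1, b1]
        exact (by decide : ∀ a b : FourVal,
          ((a = .one ∧ b = .one) ↔ and4 a b = .one)) _ _
      · rw [a2, b2]
        exact (by decide : ∀ a b : FourVal,
          (((a = .one ∨ a = .i) ∧ (b = .one ∨ b = .i)) ↔
            (and4 a b = .one ∨ and4 a b = .i))) _ _
      · rw [a3, b3]
        exact (by decide : ∀ a b : FourVal,
          ((a = .zero ∨ b = .zero) ↔ and4 a b = .zero)) _ _
      · rw [a4, b4]
        exact (by decide : ∀ a b : FourVal,
          (((a = .zero ∨ a = .j) ∨ (b = .zero ∨ b = .j)) ↔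
            (and4 a b = .zero ∨ and4 a b = .j))) _ _
  | or A B ihA ihB =>
      obtain ⟨a1, a2, a3, a4⟩ := ihA
      obtain ⟨b1, b2, b3, b4⟩ := ihB
      refine ⟨?_, ?_, ?_, ?_⟩ <;> simp only [force, I4]
      · rw [a1, b1]
        exact (by decide : ∀ a b : FourVal,
          ((a = .one ∨ b = .one) ↔ or4 a b = .one)) _ _
      · rw [a2, b2]
        exact (by decide : ∀ a b : FourVal,
          (((a = .one ∨ a = .i) ∨ (b = .one ∨ b = .i)) ↔
            (or4 a b = .one ∨ or4 a b = .i))) _ _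
      · rw [a3, b3]
        exact (by decide : ∀ a b : FourVal,
          ((a = .zero ∧ b = .zero) ↔ or4 a b = .zero)) _ _
      · rw [a4, b4]
        exact (by decide : ∀ a b : FourVal,
          (((a = .zero ∨ a = .j) ∧ (b = .zero ∨ b = .j)) ↔
            (or4 a b = .zero ∨ or4 a b = .j))) _ _
  | imp A B ihA ihB =>
      obtain ⟨a1, a2, a3, a4⟩ := ihA
      obtain ⟨b1, b2, b3, b4⟩ := ihB
      refine ⟨?_, ?_, ?_, ?_⟩ <;> simp only [force, I4]
      · rw [forall_above hxy habove (fun u => (force M A u).1 → (force M B u).1),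
          a1, b1, a2, b2]
        exact (by decide : ∀ a b : FourVal,
          (((a = .one → b = .one) ∧ ((a = .one ∨ a = .i) → (b = .one ∨ b = .i))) ↔
            imp4 a b = .one)) _ _
      · rw [forall_top hmax (fun u => (force M A u).1 → (force M B u).1), a2, b2]
        exact (by decide : ∀ a b : FourVal,
          ((((a = .one ∨ a = .i) → (b = .one ∨ b = .i))) ↔
            (imp4 a b = .one ∨ imp4 a b = .i))) _ _
      · rw [forall_above hxy habove (fun u => ¬ (force M A u).2), a3, a4, b3]
        exact (by decide : ∀ a b : FourVal,
          (((¬ a = .zero ∧ ¬ (a = .zero ∨ a = .j)) ∧ b = .zero) ↔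
            imp4 a b = .zero)) _ _
      · rw [forall_top hmax (fun u => ¬ (force M A u).2), a4, b4]
        exact (by decide : ∀ a b : FourVal,
          ((¬ (a = .zero ∨ a = .j) ∧ (b = .zero ∨ b = .j)) ↔
            (imp4 a b = .zero ∨ imp4 a b = .j))) _ _

open Classical in
noncomputable def mkval (M : BDi3Model) (x y : M.W) (n : Nat) : FourVal :=
  if M.Vp x n then .one else if M.Vm x n then .zero else if M.Vp y n then .i else .j

lemma mkval_one (M : BDi3Model) (x y : M.W) (n : Nat) :
    M.Vp x n ↔ mkval M x y n = .one := by
  unfold mkval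
  split_ifs with p1 p2 p3
  · exact iff_of_true p1 rfl
  · exact iff_of_false p1 (by decide)
  · exact iff_of_false p1 (by decide)
  · exact iff_of_false p1 (by decide)

lemma mkval_zero (M : BDi3Model) (x y : M.W) (n : Nat) :
    M.Vm x n ↔ mkval M x y n = .zero := by
  unfold mkval
  split_ifs with p1 p2 p3
  · exact iff_of_false (fun hm => M.disjoint x n ⟨p1, hm⟩) (by decide)
  · exact iff_of_true p2 rfl
  · exact iff_of_false p2 (by decide)
  · exact iff_of_false p2 (by decide)

lemma mkval_top_pos (M : BDi3Model) (x y : M.W) (hxy : M.le x y) (n : Nat) :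
    M.Vp y n ↔ (mkval M x y n = .one ∨ mkval M x y n = .i) := by
  unfold mkval
  split_ifs with p1 p2 p3
  · exact iff_of_true (M.monoP hxy p1) (Or.inl rfl)
  · exact iff_of_false (fun hp => M.disjoint y n ⟨hp, M.monoM hxy p2⟩) (by decide)
  · exact iff_of_true p3 (Or.inr rfl)
  · exact iff_of_false p3 (by decide)

lemma mkval_top_neg (M : BDi3Model) (x y : M.W) (hxy : M.le x y)
    (n : Nat) (hdet : M.Vp y n ∨ M.Vm y n) :
    M.Vm y n ↔ (mkval M x y n = .zero ∨ mkval M x y n = .j) := by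
  unfold mkval
  split_ifs with p1 p2 p3
  · exact iff_of_false (fun hm => M.disjoint y n ⟨M.monoP hxy p1, hm⟩) (by decide)
  · exact iff_of_true (M.monoM hxy p2) (Or.inl rfl)
  · exact iff_of_false (fun hm => M.disjoint y n ⟨p3, hm⟩) (by decide)
  · exact iff_of_true (hdet.resolve_left p3) (Or.inr rfl)

/-- The four-valued tables are sound and complete for the class of linear
two-element BDi3-Kripke models. -/
theorem fourValued_adequate (Γ : Set Fm) (A : Fm) : consI3G3 Γ A ↔ cons4 Γ A := by
  constructor
  · -- soundness of Kripke consequence implies 4-valued consequence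
    intro h v hΓ
    classical
    let M : BDi3Model :=
      { W := Bool
        le := fun a b => a = true → b = true
        refl := fun _ h => h
        trans := fun h1 h2 h => h2 (h1 h)
        antisymm := by
          intro a b h1 h2
          cases a <;> cases b <;> simp_all
        Vp := fun b n => if b then (v n = .one ∨ v n = .i) else v n = .one
        Vm := fun b n => if b then (v n = .zero ∨ v n = .j) else v n = .zero
        monoP := by
          intro w x n hle hv
          cases w <;> cases x <;> simp_all
        monoM := by
          intro w x n hle hv
          cases w <;> cases x <;> simp_all
        disjoint := by
          intro w n
          cases w <;> rcases hn : v n <;> simp [hn]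
        maxsucc := by
          intro w
          exact ⟨true, fun _ => rfl, fun y hy => hy rfl⟩
        po := by
          intro w x n _
          refine ⟨true, fun _ => rfl, ?_⟩
          rcases hn : v n <;> simp [hn] }
    have hlin : linearM M := by
      intro a b
      cases a <;> cases b <;> simp [M]
    have htwo : atMostTwo M := by
      intro a b c
      cases a <;> cases b <;> cases c <;> simp [M]
    have hk := key M.toKModel false true (fun _ => rfl)
      (by intro u _; cases u; exacts [Or.inl rfl, Or.inr rfl])
      (fun u hu => hu rfl) v
      (fun n => by simp [M]) (fun n => by simp [M])
      (fun n => by simp [M]) (fun n => by simp [M])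
    have := h M hlin htwo false (fun B hB => (hk B).1.mpr (hΓ B hB))
    exact (hk A).1.mp this
  · -- completeness: 4-valued consequence implies Kripke consequence
    intro h M hlin htwo w hΓ
    classical
    obtain ⟨y, hwy, hymax⟩ := M.maxsucc w
    have habove : ∀ u, M.le w u → u = w ∨ u = y := by
      intro u hu
      rcases htwo u w y with h' | h' | h'
      · exact Or.inl h'
      · exact Or.inr h'
      · subst h'
        exact Or.inr (hymax u hu)
    have hdet : ∀ n, M.Vp y n ∨ M.Vm y n := by
      intro n
      obtain ⟨z, hz, hor⟩ := M.po y y n (M.refl y)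
      rcases hymax z hz with rfl
      exact hor
    have hk := key M.toKModel w y hwy habove (fun u hu => hymax u hu) (mkval M w y)
      (mkval_one M w y) (mkval_top_pos M w y hwy) (mkval_zero M w y)
      (fun n => mkval_top_neg M w y hwy n (hdet n))
    have := h (mkval M w y) (fun B hB => (hk B).1.mp (hΓ B hB))
    exact (hk A).1.mpr this
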